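/- arXiv:2404.10532 — 2 statements merged into one kernel-verified Lean document; each statement's English description precedes it below -/
import Mathlib

section
/- Let n ≥ 2. For each self-conjugate 2n-core c with φ_{2n}(c) = (m_0,…,m_{n−1}, −m_{n−1},…,−m_0), set c′ := φ_{2n+1}^{-1}(m_0,…,m_{n−1}, 0, −m_{n−1},…,−m_0). Then the map c ↦ c′ is a bijection from 𝒞_{2n}^s (self-conjugate 2n-cores) onto 𝒞_{2n+1}^s (self-conjugate (2n+1)-cores), and |c′| = |c| + a_n(c), where a_n(c) is the number of boxes of c whose residue modulo 2n equals n. -/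
open scoped Classical

/-- `p k` is the `(k+1)`-st part `λ_{k+1}` of the partition `λ` :
partitions are encoded by their (eventually zero, antitone) sequence of parts. -/
def IsPartition (p : ℕ → ℕ) : Prop :=
  Antitone p ∧ ∃ N, ∀ i, N ≤ i → p i = 0

/-- The number of (nonzero) parts of a partition. -/
noncomputable def plen (p : ℕ → ℕ) : ℕ := Nat.card {i : ℕ // p i ≠ 0}

/-- The number of boxes `|λ|` of a partition. -/
noncomputable def psize (p : ℕ → ℕ) : ℕ := ∑ i ∈ Finset.range (plen p), p i

/-- The conjugate partition : `pconj p j = λ^tr_{j+1}`. -/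
noncomputable def pconj (p : ℕ → ℕ) (j : ℕ) : ℕ := Nat.card {i : ℕ // j + 1 ≤ p i}

/-- The size of the Durfee square of a partition. -/
noncomputable def durfee (p : ℕ → ℕ) : ℕ := Nat.card {i : ℕ // i + 1 ≤ p i}

/-- The cells (boxes) of the Young diagram, `0`-indexed : `(i, j)` is the box in
row `i+1` and column `j+1`. -/
noncomputable def cells (p : ℕ → ℕ) : Finset (ℕ × ℕ) :=
  (Finset.range (plen p) ×ˢ Finset.range (p 0)).filter fun s => s.2 < p s.1

/-- The hook length of the (0-indexed) box `(i, j)` :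
`h = λ_{i+1} - (j+1) + λ^tr_{j+1} - (i+1) + 1`. -/
noncomputable def hookLen (p : ℕ → ℕ) (i j : ℕ) : ℕ :=
  (p i - j) + (pconj p j - i) - 1

/-- The multiset of hook lengths `ℋ(λ)`. -/
noncomputable def hooks (p : ℕ → ℕ) : Multiset ℕ :=
  (cells p).val.map fun s => hookLen p s.1 s.2

/-- The multiset of hook lengths of the boxes strictly above the main diagonal. -/
noncomputable def hooksAbove (p : ℕ → ℕ) : Multiset ℕ :=
  ((cells p).filter fun s => s.1 < s.2).val.map fun s => hookLen p s.1 s.2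

/-- The multiset of hook lengths of the boxes strictly below the main diagonal. -/
noncomputable def hooksBelow (p : ℕ → ℕ) : Multiset ℕ :=
  ((cells p).filter fun s => s.2 < s.1).val.map fun s => hookLen p s.1 s.2

/-- `p` is an `n`-core : no hook length is equal to `n`. -/
def IsCore (n : ℕ) (p : ℕ → ℕ) : Prop := n ∉ hooks p

/-- Self-conjugate partitions. -/
def SelfConj (p : ℕ → ℕ) : Prop := p = pconj p

/-- Distinct partitions (strictly decreasing nonzero parts). -/
def IsDistinct (p : ℕ → ℕ) : Prop := ∀ i, p (i + 1) ≠ 0 → p (i + 1) < p i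

/-- Doubled distinct partitions : `λ_i = λ^tr_i + 1` for `i` at most
the size of the Durfee square. -/
def IsDD (p : ℕ → ℕ) : Prop := ∀ i < durfee p, p i = pconj p i + 1

/-- Conjugates of doubled distinct partitions. -/
def IsDDtr (p : ℕ → ℕ) : Prop := ∃ q, IsPartition q ∧ IsDD q ∧ p = pconj q

/-- The doubled distinct partition `λ̄λ̄` of a distinct partition `λ̄` :
add `λ̄_i` boxes to the `i`-th column of the shifted Young diagram of `λ̄`. -/
noncomputable def double (b : ℕ → ℕ) : ℕ → ℕ := fun i =>
  if i < plen b then b i + (i + 1)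
  else Nat.card {j : ℕ // j < plen b ∧ i + 1 ≤ b j + j}

/-- The self-conjugate partition associated with a distinct partition `λ̄` :
add `λ̄_i - 1` boxes to the `i`-th column of the shifted Young diagram of `λ̄`. -/
noncomputable def scOf (b : ℕ → ℕ) : ℕ → ℕ := fun i =>
  if i < plen b then b i + i
  else Nat.card {j : ℕ // j < plen b ∧ i + 1 ≤ b j + j}

/-- The binary word `ψ(λ) = (c_k)_{k ∈ ℤ}` of a partition :
`c_k = 0` iff `k ∈ {λ_i - i : i ≥ 1}` and `c_k = 1` otherwise
(i.e. iff `k ∈ {j - λ^tr_j - 1 : j ≥ 1}`). -/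
noncomputable def word (p : ℕ → ℕ) (k : ℤ) : ℕ :=
  if ∃ m : ℕ, k = (p m : ℤ) - ((m : ℤ) + 1) then 0 else 1

/-- The `g`-charge of a `g`-core : `m_i = min {k ∈ ℤ : c_{kg+i} = 1}`. -/
noncomputable def ncharge (g : ℕ) (p : ℕ → ℕ) (i : ℕ) : ℤ :=
  sInf {k : ℤ | word p (k * (g : ℤ) + (i : ℤ)) = 1}

/-- The subword of residue `k` modulo `g` of the word of `p`. -/
noncomputable def subword (g k : ℕ) (p : ℕ → ℕ) (i : ℤ) : ℕ :=
  word p ((g : ℤ) * i + (k : ℤ))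

/-- The shift turning the subword of residue `k` into a balanced partition word. -/
noncomputable def qcharge (g : ℕ) (p : ℕ → ℕ) (k : ℕ) : ℤ :=
  (Nat.card {i : ℕ // subword g k p (i : ℤ) = 0} : ℤ) -
    (Nat.card {i : ℕ // subword g k p (-((i : ℤ) + 1)) = 1} : ℤ)

/-- `ν` is the `k`-th component of the `g`-quotient of `p` : its word is the
subword of residue `k` of the word of `p`, reindexed so as to be balanced. -/
def IsQuotientAt (g : ℕ) (p : ℕ → ℕ) (k : ℕ) (ν : ℕ → ℕ) : Prop :=
  ∀ i : ℤ, word ν i = subword g k p (i + qcharge g p k)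

/-- `ω` is the `g`-core of `p` : every subword of its word is sorted
(all `0`'s, then all `1`'s), with transition index the charge of `p`. -/
def IsCoreOf (g : ℕ) (p ω : ℕ → ℕ) : Prop :=
  ∀ k < g, ∀ i : ℤ, (subword g k ω i = 1 ↔ qcharge g p k ≤ i)

/-- `(ω, ν)` is the Littlewood decomposition of `p` for the modulus `g`. -/
def IsLittlewood (g : ℕ) (p ω : ℕ → ℕ) (ν : ℕ → ℕ → ℕ) : Prop :=
  IsCoreOf g p ω ∧ ∀ k < g, IsQuotientAt g p k (ν k)

/-- The number `a_r` of boxes of residue `r` modulo `g`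
(the residue of the box `(i, j)` -- `0`-indexed -- being `(j - i) mod g`). -/
noncomputable def resCount (g : ℕ) (p : ℕ → ℕ) (r : ℕ) : ℕ :=
  ((cells p).filter fun s => ((s.2 : ℤ) - (s.1 : ℤ)) % (g : ℤ) = (r : ℤ)).card

/-- The rectangular partition with `r` rows of length `c`. -/
def rect (r c : ℕ) : ℕ → ℕ := fun i => if i < r then c else 0

/-- The statistic `m = max({1} ∪ {(g + λ̄_i)/g : λ̄_i ≡ 0 (mod g)})`. -/
noncomputable def mStat (g : ℕ) (b : ℕ → ℕ) : ℕ :=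
  sSup ({1} ∪ {k : ℕ | ∃ i < plen b, g ∣ b i ∧ k = (g + b i) / g})

/-- The statistic `m' = max({0} ∪ {λ̄_i/g : λ̄_i ≡ g/2 (mod g)})`. -/
noncomputable def mStat' (g : ℕ) (b : ℕ → ℕ) : ℕ :=
  sSup ({0} ∪ {k : ℕ | ∃ i < plen b, 2 * (b i % g) = g ∧ k = b i / g})

/-- The vector `(m_0, …, m_{n-1}, 0, -m_{n-1}, …, -m_0)` of length `2n + 1`. -/
noncomputable def extVecAp (n : ℕ) (m : ℕ → ℤ) : ℕ → ℤ := fun i =>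
  if i < n then m i
  else if i = n then 0
  else if i ≤ 2 * n then - m (2 * n - i)
  else 0

/-!
Encode a partition by its beta-set, the beads `λ_i - i` of an abacus, whose gaps are the
`j - λ^tr_j - 1`. Boxes are the inversions (a bead above a gap), the hook length being their
distance, so `g`-cores are the partitions whose beads are flush on every runner of the
`g`-abacus, `m_i` being the level of the first gap on runner `i`; conjugation reflects the beads
onto the gaps through `-1/2`, so self-conjugacy means `m_{g-1-i} = -m_i`.

Inserting a runner of charge `0` at position `n` turns the abacus of `c` into that of `c'`: the
old beads move along an order embedding and the new runner is full exactly at negative levels.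
The inversions of `c'` are thus the stretched inversions of `c` plus those with one end on the
new runner, and the latter match the boxes of `c` of residue `n`: a box of content `t` is paired
with the position of level `t / 2n` on the new runner and with the bead of its row if `t ≥ 0`,
the gap of its column if `t < 0`.
-/

open Set

lemma mem_iff_lt_natCard_of_isLowerSet {s : Set ℕ} (hs : IsLowerSet s) (hfin : s.Finite)
    (k : ℕ) : k ∈ s ↔ k < Nat.card s := by
  rcases hs.eq_univ_or_Iio with rfl | ⟨a, rfl⟩
  · exact absurd hfin infinite_univ
  · simp

namespace IsPartition

variable {p : ℕ → ℕ}

lemma ne_zero_iff (hp : IsPartition p) (i : ℕ) : p i ≠ 0 ↔ i < plen p := by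
  obtain ⟨hanti, N, hN⟩ := hp
  refine mem_iff_lt_natCard_of_isLowerSet (s := {i | p i ≠ 0})
    (fun i j hji hi => ?_) ((finite_Iio N).subset fun i hi => ?_) i
  · have := hanti hji
    simp only [mem_ofPred_eq] at hi ⊢
    omega
  · by_contra h
    exact hi (hN i (not_lt.1 h))

lemma eq_zero_of_plen_le (hp : IsPartition p) {i : ℕ} (hi : plen p ≤ i) : p i = 0 := by
  by_contra h
  exact absurd ((hp.ne_zero_iff i).1 h) (by omega)

lemma lt_iff_lt_pconj (hp : IsPartition p) (i j : ℕ) : j < p i ↔ i < pconj p j := by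
  obtain ⟨hanti, N, hN⟩ := hp
  refine mem_iff_lt_natCard_of_isLowerSet (s := {i | j + 1 ≤ p i})
    (fun i i' hii' hi => le_trans hi (hanti hii')) ((finite_Iio N).subset fun i hi => ?_) i
  by_contra h
  have := hN i (not_lt.1 h)
  simp only [mem_ofPred_eq] at hi
  omega

lemma conj (hp : IsPartition p) : IsPartition (pconj p) := by
  refine ⟨fun j j' hjj' => ?_, p 0, fun j hj => ?_⟩
  · by_contra h
    have h1 := (hp.lt_iff_lt_pconj (pconj p j) j').2 (not_le.1 h)
    have h2 := (hp.lt_iff_lt_pconj (pconj p j) j).1 (by omega)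
    omega
  · by_contra h
    have := (hp.lt_iff_lt_pconj 0 j).2 (Nat.pos_of_ne_zero h)
    omega

end IsPartition

/-- `rowBead p` enumerates the zeros of `word p` (the beads), `colGap p` its ones (the gaps). -/
def rowBead (p : ℕ → ℕ) (i : ℕ) : ℤ := (p i : ℤ) - ((i : ℤ) + 1)

noncomputable def colGap (p : ℕ → ℕ) (j : ℕ) : ℤ := (j : ℤ) - pconj p j

def betaSet (p : ℕ → ℕ) : Set ℤ := range (rowBead p)

section BetaSet

variable {p q : ℕ → ℕ}

lemma word_eq_one_iff (x : ℤ) : word p x = 1 ↔ x ∉ betaSet p := by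
  simp only [word, betaSet, rowBead, mem_range, eq_comm (b := x)]
  split_ifs <;> simp_all

lemma rowBead_strictAnti (hp : IsPartition p) : StrictAnti (rowBead p) :=
  strictAnti_nat_of_succ_lt fun i => by
    have := hp.1 (Nat.le_add_right i 1)
    simp only [rowBead]
    omega

lemma colGap_strictMono (hp : IsPartition p) : StrictMono (colGap p) :=
  strictMono_nat_of_lt_succ fun j => by
    have := hp.conj.1 (Nat.le_add_right j 1)
    simp only [colGap]
    omega

lemma colGap_lt_rowBead_iff (hp : IsPartition p) (i j : ℕ) :
    colGap p j < rowBead p i ↔ j < p i := by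
  have := hp.lt_iff_lt_pconj i j
  simp only [colGap, rowBead]
  omega

lemma rowBead_lt (hp : IsPartition p) (i : ℕ) : rowBead p i < p 0 := by
  have := hp.1 (Nat.zero_le i)
  simp only [rowBead]
  omega

lemma mem_betaSet_of_lt (hp : IsPartition p) {x : ℤ} (hx : x < -(plen p : ℤ)) :
    x ∈ betaSet p := by
  refine ⟨(-x - 1).toNat, ?_⟩
  simp only [rowBead, hp.eq_zero_of_plen_le (show plen p ≤ (-x - 1).toNat by omega)]
  omega

lemma exists_colGap_eq (hp : IsPartition p) {x : ℤ} (hx : x ∉ betaSet p) :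
    ∃ j, colGap p j = x := by
  -- the gap `x` lies in column `x + i`, where `i` is the number of beads above `x`
  have hex : ∃ i, rowBead p i < x := ⟨(-x).toNat + plen p, by
    simp only [rowBead, hp.eq_zero_of_plen_le (Nat.le_add_left _ _)]
    omega⟩
  obtain ⟨i, hi, hprev⟩ : ∃ i, rowBead p i < x ∧ ∀ r < i, x < rowBead p r :=
    ⟨Nat.find hex, Nat.find_spec hex, fun r hr =>
      lt_of_le_of_ne (not_lt.1 (Nat.find_min hex hr)) fun h => hx ⟨r, h.symm⟩⟩
  simp only [rowBead] at hi
  have hconj : pconj p (x + i).toNat = i := by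
    refine le_antisymm (not_lt.1 fun h => ?_) ?_
    · have := (hp.lt_iff_lt_pconj _ _).2 h
      omega
    · rcases i with _ | i
      · exact Nat.zero_le _
      · have := hprev i (Nat.lt_succ_self i)
        simp only [rowBead] at this
        have := (hp.lt_iff_lt_pconj i (x + (i + 1 : ℕ)).toNat).1 (by omega)
        omega
  refine ⟨(x + i).toNat, ?_⟩
  simp only [colGap, hconj]
  omega

lemma rowBead_ne_colGap (hp : IsPartition p) (i j : ℕ) : rowBead p i ≠ colGap p j := by
  have := colGap_lt_rowBead_iff hp i j
  have := hp.lt_iff_lt_pconj i j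
  simp only [colGap, rowBead] at *
  omega

lemma compl_betaSet (hp : IsPartition p) : (betaSet p)ᶜ = range (colGap p) :=
  Set.ext fun x => ⟨exists_colGap_eq hp, by
    rintro ⟨j, rfl⟩ ⟨i, h⟩
    exact rowBead_ne_colGap hp i j h⟩

lemma eq_of_betaSet_eq (hp : IsPartition p) (hq : IsPartition q)
    (h : betaSet p = betaSet q) : p = q := by
  have hbead : rowBead p = rowBead q := by
    have := ((rowBead_strictAnti hp).dual_right.range_inj (rowBead_strictAnti hq).dual_right).1
      (by simp only [range_comp, betaSet] at h ⊢; rw [h])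
    exact funext fun i => congrFun this i
  funext i
  have := congrFun hbead i
  simp only [rowBead] at this
  omega

lemma mem_betaSet_conj_iff (hp : IsPartition p) (x : ℤ) :
    x ∈ betaSet (pconj p) ↔ -1 - x ∉ betaSet p := by
  rw [← mem_compl_iff, compl_betaSet hp]
  simp only [betaSet, mem_range, rowBead, colGap]
  exact exists_congr fun j => by omega

lemma selfConj_iff (hp : IsPartition p) :
    SelfConj p ↔ ∀ x, -1 - x ∈ betaSet p ↔ x ∉ betaSet p := by
  refine ⟨fun h x => ?_, fun h => eq_of_betaSet_eq hp hp.conj (ext fun x => ?_)⟩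
  · have := mem_betaSet_conj_iff hp (-1 - x)
    rwa [← h, sub_sub_cancel] at this
  · rw [mem_betaSet_conj_iff hp, h, not_not]

lemma mem_cells (hp : IsPartition p) {s : ℕ × ℕ} : s ∈ cells p ↔ s.2 < p s.1 := by
  simp only [cells, Finset.mem_filter, Finset.mem_product, Finset.mem_range,
    and_iff_right_iff_imp]
  exact fun h => ⟨(hp.ne_zero_iff _).1 (by omega), h.trans_le (hp.1 (Nat.zero_le _))⟩

lemma psize_eq_card_cells (hp : IsPartition p) : psize p = (cells p).card := by
  simp only [psize, cells, Finset.card_filter, Finset.sum_product]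
  refine Finset.sum_congr rfl fun i _ => ?_
  rw [Finset.sum_boole, Finset.range_eq_Ico, Finset.Ico_filter_lt]
  simp [hp.1 (Nat.zero_le i)]

def inversions (Z : Set ℤ) : Set (ℤ × ℤ) := {s | s.1 ∈ Z ∧ s.2 ∉ Z ∧ s.2 < s.1}

lemma inversions_betaSet (hp : IsPartition p) :
    inversions (betaSet p) = (fun s : ℕ × ℕ => (rowBead p s.1, colGap p s.2)) '' cells p := by
  ext ⟨x, y⟩
  simp only [inversions, mem_ofPred_eq, mem_image, Finset.mem_coe, mem_cells hp, Prod.mk.injEq,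
    Prod.exists]
  constructor
  · rintro ⟨⟨i, rfl⟩, hy, hyx⟩
    rw [← mem_compl_iff, compl_betaSet hp] at hy
    obtain ⟨j, rfl⟩ := hy
    exact ⟨i, j, (colGap_lt_rowBead_iff hp i j).1 hyx, rfl, rfl⟩
  · rintro ⟨i, j, hij, rfl, rfl⟩
    refine ⟨mem_range_self i, ?_, (colGap_lt_rowBead_iff hp i j).2 hij⟩
    rw [← mem_compl_iff, compl_betaSet hp]
    exact mem_range_self j

lemma injective_rowBead_colGap (hp : IsPartition p) :
    Function.Injective fun s : ℕ × ℕ => (rowBead p s.1, colGap p s.2) :=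
  (rowBead_strictAnti hp).injective.prodMap (colGap_strictMono hp).injective

lemma finite_inversions_betaSet (hp : IsPartition p) : (inversions (betaSet p)).Finite := by
  rw [inversions_betaSet hp]
  exact (Finset.finite_toSet _).image _

lemma psize_eq_ncard_inversions (hp : IsPartition p) :
    psize p = (inversions (betaSet p)).ncard := by
  rw [inversions_betaSet hp, (injective_rowBead_colGap hp).injOn.ncard_image, ncard_coe_finset,
    psize_eq_card_cells hp]

lemma hookLen_eq (hp : IsPartition p) {i j : ℕ} (h : j < p i) :
    (hookLen p i j : ℤ) = rowBead p i - colGap p j := by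
  have := (hp.lt_iff_lt_pconj i j).1 h
  simp only [hookLen, rowBead, colGap]
  omega

lemma mem_hooks_iff (hp : IsPartition p) (t : ℕ) :
    t ∈ hooks p ↔ ∃ s ∈ inversions (betaSet p), s.1 - s.2 = t := by
  rw [inversions_betaSet hp, exists_mem_image]
  simp only [hooks, Multiset.mem_map, Finset.mem_val, Finset.mem_coe]
  refine exists_congr fun s => and_congr_right fun h => ?_
  rw [← hookLen_eq hp ((mem_cells hp).1 h)]
  exact Nat.cast_inj.symm

lemma isCore_iff (hp : IsPartition p) {g : ℕ} (hg : 0 < g) :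
    IsCore g p ↔ ∀ x ∈ betaSet p, x - g ∈ betaSet p := by
  simp only [IsCore, mem_hooks_iff hp, inversions, mem_ofPred_eq, not_exists, not_and]
  constructor
  · intro h x hx
    by_contra hx'
    exact h (x, x - g) ⟨hx, hx', by omega⟩ (by simp)
  · rintro h ⟨x, y⟩ ⟨hx, hy, -⟩ hxy
    obtain rfl : y = x - g := by simp only at hxy; omega
    exact hy (h x hx)

def residuePairs (Z : Set ℤ) (g r : ℕ) : Set (ℤ × ℤ) :=
  {s | s.1 % g = r ∧ (s.1 < 0 ∧ s.2 ∉ Z ∧ s.2 < s.1 ∨ 0 ≤ s.1 ∧ s.2 ∈ Z ∧ s.1 ≤ s.2)}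

noncomputable def contentPair (p : ℕ → ℕ) (s : ℕ × ℕ) : ℤ × ℤ :=
  ((s.2 : ℤ) - s.1, if 0 ≤ (s.2 : ℤ) - s.1 then rowBead p s.1 else colGap p s.2)

lemma residuePairs_betaSet (hp : IsPartition p) (g r : ℕ) :
    residuePairs (betaSet p) g r =
      contentPair p '' ((cells p).filter fun s => ((s.2 : ℤ) - s.1) % g = r) := by
  ext ⟨t, y⟩
  simp only [residuePairs, contentPair, mem_ofPred_eq, mem_image, Finset.coe_filter,
    mem_cells hp, Prod.mk.injEq, Prod.exists]
  constructor
  · rintro ⟨htr, ⟨ht, hy, hyt⟩ | ⟨ht, ⟨i, rfl⟩, hty⟩⟩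
    · rw [← mem_compl_iff, compl_betaSet hp] at hy
      obtain ⟨j, rfl⟩ := hy
      have hji : j < p (j - t).toNat := by
        rw [hp.lt_iff_lt_pconj]
        simp only [colGap] at hyt
        omega
      have hcontent : (j : ℤ) - (j - t).toNat = t := by omega
      refine ⟨(j - t).toNat, j, ⟨hji, by rwa [hcontent]⟩, hcontent, ?_⟩
      rw [hcontent, if_neg (by omega)]
    · have hcontent : ((i + t).toNat : ℤ) - i = t := by omega
      refine ⟨i, (i + t).toNat, ⟨?_, by rwa [hcontent]⟩, hcontent, ?_⟩
      · simp only [rowBead] at hty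
        omega
      · rw [hcontent, if_pos ht]
  · rintro ⟨i, j, ⟨hij, htr⟩, rfl, rfl⟩
    refine ⟨htr, ?_⟩
    split_ifs with ht
    · refine Or.inr ⟨ht, mem_range_self i, ?_⟩
      simp only [rowBead]
      omega
    · refine Or.inl ⟨by omega, ?_, ?_⟩
      · rw [← mem_compl_iff, compl_betaSet hp]
        exact mem_range_self j
      · have := (hp.lt_iff_lt_pconj i j).1 hij
        simp only [colGap]
        omega

lemma contentPair_injective (hp : IsPartition p) : Function.Injective (contentPair p) := by
  rintro ⟨i, j⟩ ⟨i', j'⟩ h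
  simp only [contentPair, Prod.mk.injEq] at h ⊢
  obtain ⟨ht, hb⟩ := h
  rw [← ht] at hb
  split_ifs at hb
  · have := (rowBead_strictAnti hp).injective hb
    omega
  · have := (colGap_strictMono hp).injective hb
    omega

lemma finite_residuePairs_betaSet (hp : IsPartition p) (g r : ℕ) :
    (residuePairs (betaSet p) g r).Finite := by
  rw [residuePairs_betaSet hp]
  exact (Finset.finite_toSet _).image _

lemma resCount_eq_ncard_residuePairs (hp : IsPartition p) (g r : ℕ) :
    resCount g p r = (residuePairs (betaSet p) g r).ncard := by
  rw [residuePairs_betaSet hp, (contentPair_injective hp).injOn.ncard_image, ncard_coe_finset,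
    resCount]

end BetaSet

lemma StrictAnti.add_sub_le {e : ℕ → ℤ} (he : StrictAnti e) {i j : ℕ} (hij : i ≤ j) :
    e j + (j - i) ≤ e i := by
  induction j, hij using Nat.le_induction with
  | base => simp
  | succ j _ ih =>
    have := he (Nat.lt_add_one j)
    push_cast
    omega

lemma exists_rowBead_eq {e : ℕ → ℤ} (he : StrictAnti e) {N : ℕ}
    (hN : ∀ j, N ≤ j → e j = -((j : ℤ) + 1)) : ∃ p, IsPartition p ∧ rowBead p = e := by
  have hpos : ∀ j, 0 ≤ e j + j + 1 := fun j => by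
    rcases le_total N j with h | h
    · rw [hN j h]
      omega
    · have := he.add_sub_le h
      rw [hN N le_rfl] at this
      omega
  refine ⟨fun j => (e j + j + 1).toNat, ⟨antitone_nat_of_succ_le fun j => ?_, N, fun j hj => ?_⟩,
    funext fun j => ?_⟩
  · have := he (Nat.lt_add_one j)
    push_cast
    omega
  · simp only [hN j hj]
    omega
  · have := hpos j
    simp only [rowBead]
    omega

lemma Nat.nth_count_add {S : ℕ → Prop} [DecidablePred S] {k₀ : ℕ} (hS : ∀ k, k₀ ≤ k → S k)
    (i : ℕ) : Nat.nth S (Nat.count S k₀ + i) = k₀ + i := by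
  have hcount : Nat.count (fun k => S (k₀ + k)) i = i := by
    rw [Nat.count_eq_card_filter_range,
      Finset.filter_true_of_mem fun k _ => hS _ (Nat.le_add_right k₀ k), Finset.card_range]
  rw [← Nat.nth_count (hS (k₀ + i) (Nat.le_add_right k₀ i)), Nat.count_add, hcount]

/-- `Nat.nth S` enumerates `Z` downwards from `b - 1`; the balance condition makes its
`(-a)`-th term `a - 1`, below which `Z` is full, so the enumeration ends as `-j - 1`. -/
lemma exists_betaSet_eq {Z : Set ℤ} {a b : ℤ} (hlo : ∀ x < a, x ∈ Z) (hhi : ∀ x, b ≤ x → x ∉ Z)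
    (hbal : ((Z ∩ Ici a).ncard : ℤ) = -a) : ∃ p, IsPartition p ∧ betaSet p = Z := by
  have hZb : ∀ z ∈ Z, z < b := fun z hz => not_le.1 fun h => hhi z h hz
  have hab : a ≤ b := not_lt.1 fun h => hhi b le_rfl (hlo b h)
  set S : ℕ → Prop := fun k => b - 1 - k ∈ Z
  have hmemS : ∀ z ∈ Z, S (b - 1 - z).toNat := fun z hz => by
    have := hZb z hz
    simpa only [S, show b - 1 - ((b - 1 - z).toNat : ℤ) = z by omega]
  set k₀ := (b - a).toNat
  have hS : ∀ k, k₀ ≤ k → S k := fun k hk => hlo _ (by omega)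
  have hSinf : (Set.ofPred S).Infinite :=
    infinite_of_forall_exists_gt fun k => ⟨k + k₀ + 1, hS _ (by omega), by omega⟩
  have hcount : Nat.count S k₀ = (-a).toNat := by
    have himg : Z ∩ Ici a = (fun k : ℕ => b - 1 - k) '' ↑((Finset.range k₀).filter S) := by
      ext x
      simp only [mem_inter_iff, mem_Ici, mem_image, Finset.coe_filter, Finset.mem_range]
      refine ⟨fun ⟨hx, hax⟩ => ?_, fun ⟨k, ⟨hk, hSk⟩, hkx⟩ => ⟨hkx ▸ hSk, by omega⟩⟩
      have := hZb x hx
      exact ⟨(b - 1 - x).toNat, ⟨by omega, hmemS x hx⟩, by omega⟩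
    rw [Nat.count_eq_card_filter_range, ← ncard_coe_finset,
      ← InjOn.ncard_image (f := fun k : ℕ => b - 1 - k) (fun k _ l _ h => by simpa using h),
      ← himg]
    omega
  obtain ⟨p, hp, hbead⟩ := exists_rowBead_eq (e := fun j => b - 1 - Nat.nth S j)
    (fun i j hij => by simpa using Nat.nth_strictMono hSinf hij) (N := (-a).toNat) fun j hj => by
      obtain ⟨i, rfl⟩ := Nat.exists_eq_add_of_le hj
      simp only [← hcount, Nat.nth_count_add hS]
      omega
  refine ⟨p, hp, ?_⟩
  rw [betaSet, hbead, show (fun j => b - 1 - (Nat.nth S j : ℤ)) =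
    (fun k : ℕ => b - 1 - (k : ℤ)) ∘ Nat.nth S from rfl, range_comp,
    Nat.range_nth_of_infinite hSinf]
  ext z
  refine ⟨fun ⟨k, hk, hkz⟩ => hkz ▸ hk, fun hz => ⟨_, hmemS z hz, ?_⟩⟩
  have := hZb z hz
  simp only
  omega

lemma exists_eq_mul_add {g : ℕ} (hg : 0 < g) (x : ℤ) : ∃ k : ℤ, ∃ i < g, x = k * g + i := by
  refine ⟨x / g, (x % g).toNat, ?_, ?_⟩
  · have := Int.emod_lt_of_pos x (by omega : (0 : ℤ) < g)
    omega
  · rw [Int.toNat_of_nonneg (Int.emod_nonneg x (by omega)), Int.ediv_mul_add_emod]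

lemma mul_add_ediv_emod {G j : ℕ} (hj : j < G) (k : ℤ) :
    (k * G + j) / G = k ∧ (k * G + j) % G = j :=
  (Int.ediv_emod_unique (by omega)).2 ⟨by ring, by positivity, by exact_mod_cast hj⟩

lemma mul_add_inj {G i i' : ℕ} (hi : i < G) (hi' : i' < G) {k k' : ℤ}
    (h : k * G + i = k' * G + i') : k = k' ∧ i = i' := by
  have h₁ := mul_add_ediv_emod hi k
  have h₂ := mul_add_ediv_emod hi' k'
  rw [h] at h₁
  exact ⟨h₁.1.symm.trans h₂.1, by exact_mod_cast h₁.2.symm.trans h₂.2⟩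

lemma mul_le_mul_add_iff {g i : ℕ} (hi : i < g) {A k : ℤ} : A * g ≤ k * g + i ↔ A ≤ k := by
  have : (i : ℤ) < g := by exact_mod_cast hi
  exact ⟨fun h => not_lt.1 fun hk => by nlinarith, fun h => by nlinarith⟩

/-- The beta-set of the `g`-core with `g`-charge `m`. -/
def coreBetaSet (g : ℕ) (m : ℕ → ℤ) : Set ℤ := {x | x / g < m (x % g).toNat}

section CoreBetaSet

variable {g : ℕ} {m m' : ℕ → ℤ}

lemma mul_add_mem_coreBetaSet {i : ℕ} (hi : i < g) (k : ℤ) :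
    k * g + i ∈ coreBetaSet g m ↔ k < m i := by
  simp only [coreBetaSet, mem_ofPred_eq, (mul_add_ediv_emod hi k).1, (mul_add_ediv_emod hi k).2,
    Int.toNat_natCast]

lemma coreBetaSet_congr (hg : 0 < g) (h : ∀ i < g, m i = m' i) :
    coreBetaSet g m = coreBetaSet g m' := by
  ext x
  obtain ⟨k, i, hi, rfl⟩ := exists_eq_mul_add hg x
  rw [mul_add_mem_coreBetaSet hi, mul_add_mem_coreBetaSet hi, h i hi]

lemma sub_mem_coreBetaSet (hg : 0 < g) {x : ℤ} (hx : x ∈ coreBetaSet g m) :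
    x - g ∈ coreBetaSet g m := by
  obtain ⟨k, i, hi, rfl⟩ := exists_eq_mul_add hg x
  rw [mul_add_mem_coreBetaSet hi] at hx
  rw [show k * g + i - g = (k - 1) * g + i by ring, mul_add_mem_coreBetaSet hi]
  omega

lemma ncard_coreBetaSet_inter_Ici (hg : 0 < g) {A : ℤ} (hA : ∀ i < g, A ≤ m i) :
    ((coreBetaSet g m ∩ Ici (A * g)).ncard : ℤ) = ∑ i ∈ Finset.range g, m i - g * A := by
  have himg : coreBetaSet g m ∩ Ici (A * g) = (fun s : (_ : ℕ) × ℤ => s.2 * g + s.1) ''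
      ↑((Finset.range g).sigma fun i => Finset.Ico A (m i)) := by
    ext x
    obtain ⟨k, i, hi, rfl⟩ := exists_eq_mul_add hg x
    simp only [mem_inter_iff, mem_Ici, mem_image, Finset.coe_sigma, mem_sigma_iff,
      Finset.mem_coe, Finset.mem_range, Finset.mem_Ico, Sigma.exists]
    have hle := mul_le_mul_add_iff (A := A) (k := k) hi
    constructor
    · rintro ⟨hmem, hAk⟩
      exact ⟨i, k, ⟨hi, hle.1 hAk, (mul_add_mem_coreBetaSet hi k).1 hmem⟩, rfl⟩
    · rintro ⟨i', k', ⟨hi', hAk', hk'⟩, heq⟩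
      obtain ⟨rfl, rfl⟩ := mul_add_inj hi' hi heq
      exact ⟨(mul_add_mem_coreBetaSet hi k').2 hk', hle.2 hAk'⟩
  rw [himg, InjOn.ncard_image, ncard_coe_finset, Finset.card_sigma]
  · push_cast
    rw [Finset.sum_congr rfl fun i hi => by rw [Int.card_Ico, Int.toNat_of_nonneg (by
      have := hA i (Finset.mem_range.1 hi); omega)], Finset.sum_sub_distrib]
    simp
  · rintro ⟨i, k⟩ hik ⟨i', k'⟩ hik' heq
    simp only [Finset.coe_sigma, mem_sigma_iff, Finset.mem_coe, Finset.mem_range] at hik hik'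
    obtain ⟨rfl, rfl⟩ := mul_add_inj hik.1 hik'.1 heq
    rfl

variable {p q : ℕ → ℕ}

lemma ncharge_eq_of_betaSet_eq (h : betaSet p = coreBetaSet g m) {i : ℕ} (hi : i < g) :
    ncharge g p i = m i := by
  have hR : {k : ℤ | word p (k * g + i) = 1} = Ici (m i) := by
    ext k
    simp only [mem_ofPred_eq, word_eq_one_iff, h, mul_add_mem_coreBetaSet hi, mem_Ici, not_lt]
  rw [ncharge, hR, csInf_Ici]

lemma sub_nat_mul_mem_betaSet (hp : IsPartition p) (hg : 0 < g) (hc : IsCore g p) {x : ℤ}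
    (hx : x ∈ betaSet p) (t : ℕ) : x - t * g ∈ betaSet p := by
  induction t with
  | zero => simpa using hx
  | succ t ih =>
    have := (isCore_iff hp hg).1 hc _ ih
    rwa [show x - (t * g : ℤ) - g = x - ((t + 1 : ℕ) : ℤ) * g by push_cast; ring] at this

lemma betaSet_eq_coreBetaSet_ncharge (hp : IsPartition p) (hg : 0 < g) (hc : IsCore g p) :
    betaSet p = coreBetaSet g (ncharge g p) := by
  ext x
  obtain ⟨k, i, hi, rfl⟩ := exists_eq_mul_add hg x
  rw [mul_add_mem_coreBetaSet hi]
  -- the levels of the gaps on runner `i` form an up-set (the core property), bounded below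
  set R := {k : ℤ | k * g + i ∉ betaSet p}
  have hR : ncharge g p i = sInf R := by simp only [ncharge, word_eq_one_iff]; rfl
  have hup : ∀ k l, k ≤ l → k ∈ R → l ∈ R := fun k l hkl hk hl => hk <| by
    have := sub_nat_mul_mem_betaSet hp hg hc hl (l - k).toNat
    rwa [Int.toNat_of_nonneg (by omega), show l * g + i - (l - k) * g = k * g + i by ring]
      at this
  have hne : R.Nonempty := ⟨p 0, fun h => by
    obtain ⟨r, hr⟩ := h
    have := rowBead_lt hp r
    nlinarith⟩
  have hbdd : BddBelow R := ⟨-(plen p : ℤ), fun l hl => not_lt.1 fun hlt =>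
    hl (mem_betaSet_of_lt hp (by nlinarith))⟩
  rw [hR]
  constructor
  · exact fun hx => not_le.1 fun hle => hup _ _ hle (Int.csInf_mem hne hbdd) hx
  · exact fun hlt => not_not.1 fun hk => not_le.2 hlt (csInf_le hbdd hk)

lemma isCore_of_betaSet_eq (hp : IsPartition p) (hg : 0 < g) (h : betaSet p = coreBetaSet g m) :
    IsCore g p :=
  (isCore_iff hp hg).2 fun _ hx => h ▸ sub_mem_coreBetaSet hg (h ▸ hx)

theorem eq_of_ncharge_eq (hp : IsPartition p) (hq : IsPartition q) (hg : 0 < g)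
    (hcp : IsCore g p) (hcq : IsCore g q) (h : ∀ i < g, ncharge g p i = ncharge g q i) :
    p = q :=
  eq_of_betaSet_eq hp hq <| by
    rw [betaSet_eq_coreBetaSet_ncharge hp hg hcp, betaSet_eq_coreBetaSet_ncharge hq hg hcq,
      coreBetaSet_congr hg h]

theorem exists_isCore_ncharge_eq (hg : 0 < g) (hsum : ∑ i ∈ Finset.range g, m i = 0) :
    ∃ p, IsPartition p ∧ IsCore g p ∧ ∀ i < g, ncharge g p i = m i := by
  set B := ∑ i ∈ Finset.range g, |m i|
  have hB : ∀ i < g, |m i| ≤ B := fun i hi =>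
    Finset.single_le_sum (fun j _ => abs_nonneg (m j)) (Finset.mem_range.2 hi)
  obtain ⟨p, hp, hZ⟩ := exists_betaSet_eq (Z := coreBetaSet g m) (a := -B * g) (b := B * g)
    (fun x hx => by
      obtain ⟨k, i, hi, rfl⟩ := exists_eq_mul_add hg x
      have := (mul_le_mul_add_iff hi).not.1 hx.not_ge
      have := neg_abs_le (m i)
      rw [mul_add_mem_coreBetaSet hi]
      linarith [hB i hi])
    (fun x hx => by
      obtain ⟨k, i, hi, rfl⟩ := exists_eq_mul_add hg x
      have := (mul_le_mul_add_iff hi).1 hx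
      have := le_abs_self (m i)
      rw [mul_add_mem_coreBetaSet hi]
      linarith [hB i hi])
    (by
      rw [ncard_coreBetaSet_inter_Ici hg fun i hi => by linarith [hB i hi, neg_abs_le (m i)],
        hsum]
      ring)
  exact ⟨p, hp, isCore_of_betaSet_eq hp hg hZ, fun i hi => ncharge_eq_of_betaSet_eq hZ hi⟩

def IsAntipalindromic (g : ℕ) (m : ℕ → ℤ) : Prop := ∀ i < g, m (g - 1 - i) = -m i

lemma IsAntipalindromic.congr (h : IsAntipalindromic g m') (hm : ∀ i < g, m i = m' i) :
    IsAntipalindromic g m := fun i hi => by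
  rw [hm i hi, hm (g - 1 - i) (by omega), h i hi]

lemma IsAntipalindromic.sum_eq_zero (h : IsAntipalindromic g m) :
    ∑ i ∈ Finset.range g, m i = 0 := by
  have hrefl := Finset.sum_range_reflect m g
  rw [Finset.sum_congr rfl fun i hi => h i (Finset.mem_range.1 hi), Finset.sum_neg_distrib]
    at hrefl
  linarith

lemma neg_one_sub_mem_coreBetaSet_iff (hg : 0 < g) :
    (∀ x, -1 - x ∈ coreBetaSet g m ↔ x ∉ coreBetaSet g m) ↔ IsAntipalindromic g m := by
  have hrefl : ∀ k : ℤ, ∀ i < g,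
      -1 - (k * g + i) ∈ coreBetaSet g m ↔ -1 - k < m (g - 1 - i) := fun k i hi => by
    have hcast : ((g - 1 - i : ℕ) : ℤ) = g - 1 - i := by omega
    rw [← mul_add_mem_coreBetaSet (show g - 1 - i < g by omega), hcast]
    ring_nf
  constructor
  · intro h i hi
    have key : ∀ k : ℤ, -1 - k < m (g - 1 - i) ↔ m i ≤ k := fun k => by
      rw [← hrefl k i hi, h, mul_add_mem_coreBetaSet hi, not_lt]
    have h1 := key (m i)
    have h2 := key (-m (g - 1 - i))
    omega
  · intro h x
    obtain ⟨k, i, hi, rfl⟩ := exists_eq_mul_add hg x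
    rw [hrefl k i hi, mul_add_mem_coreBetaSet hi, h i hi]
    omega

theorem selfConj_iff_isAntipalindromic_ncharge (hp : IsPartition p) (hg : 0 < g)
    (hc : IsCore g p) : SelfConj p ↔ IsAntipalindromic g (ncharge g p) := by
  rw [selfConj_iff hp, betaSet_eq_coreBetaSet_ncharge hp hg hc,
    neg_one_sub_mem_coreBetaSet_iff hg]

theorem exists_selfConj_ncharge_eq (hg : 0 < g) (hm : IsAntipalindromic g m) :
    ∃ p, IsPartition p ∧ IsCore g p ∧ SelfConj p ∧ ∀ i < g, ncharge g p i = m i := by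
  obtain ⟨p, hp, hc, hch⟩ := exists_isCore_ncharge_eq hg hm.sum_eq_zero
  exact ⟨p, hp, hc, (selfConj_iff_isAntipalindromic_ncharge hp hg hc).2 (hm.congr hch), hch⟩

end CoreBetaSet

/-- Moves runner `i` of the `g`-abacus to runner `i` or `i + 1` of the `(g + 1)`-abacus according
as `i < n` or `n ≤ i`; the free runner `n` consists of the `stretch g n t - 1` with `t % g = n`. -/
def stretch (g n : ℕ) (x : ℤ) : ℤ := x + x / g + if (n : ℤ) ≤ x % g then 1 else 0

section Stretch

variable {g n : ℕ}

lemma stretch_mul_add {i : ℕ} (hi : i < g) (k : ℤ) :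
    stretch g n (k * g + i) = k * (g + 1 : ℕ) + (i + if n ≤ i then 1 else 0 : ℕ) := by
  simp only [stretch, (mul_add_ediv_emod hi k).1, (mul_add_ediv_emod hi k).2, Nat.cast_le]
  split_ifs <;> push_cast <;> ring

lemma stretch_strictMono (hg : 0 < g) : StrictMono (stretch g n) := by
  refine strictMono_int_of_lt_succ fun x => ?_
  obtain ⟨k, i, hi, rfl⟩ := exists_eq_mul_add hg x
  rcases Nat.lt_or_ge (i + 1) g with h | h
  · rw [add_assoc, ← Nat.cast_add_one, stretch_mul_add hi, stretch_mul_add h]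
    split_ifs <;> push_cast <;> omega
  · rw [show k * g + i + 1 = (k + 1) * g + (0 : ℕ) by push_cast; nlinarith, stretch_mul_add hi,
      stretch_mul_add hg]
    split_ifs <;> push_cast <;> nlinarith

lemma stretch_emod_ne (hg : 0 < g) (x : ℤ) : stretch g n x % (g + 1 : ℕ) ≠ n := by
  obtain ⟨k, i, hi, rfl⟩ := exists_eq_mul_add hg x
  rw [stretch_mul_add hi, (mul_add_ediv_emod (by split_ifs <;> omega) k).2]
  split_ifs <;> omega

lemma stretch_sub_one_of_emod_eq {t : ℤ} (ht : t % g = n) :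
    stretch g n t - 1 = t / g * (g + 1 : ℕ) + n := by
  simp only [stretch, ht, le_refl, if_true]
  have := Int.ediv_mul_add_emod t g
  push_cast
  linarith

lemma stretch_ne_stretch_sub_one (hg : 0 < g) (hng : n < g) {t : ℤ} (ht : t % g = n) (x : ℤ) :
    stretch g n x ≠ stretch g n t - 1 := fun h => stretch_emod_ne hg x <| by
  rw [h, stretch_sub_one_of_emod_eq ht, (mul_add_ediv_emod (by omega) _).2]

lemma exists_stretch_or_stretch_sub_one (hng : n < g) (z : ℤ) :
    (∃ x, stretch g n x = z) ∨ ∃ t : ℤ, t % g = n ∧ stretch g n t - 1 = z := by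
  obtain ⟨k, j, hj, rfl⟩ := exists_eq_mul_add (show 0 < g + 1 by omega) z
  rcases lt_trichotomy j n with h | h | h
  · refine Or.inl ⟨k * g + j, ?_⟩
    rw [stretch_mul_add (by omega), if_neg (by omega), add_zero]
  · subst h
    refine Or.inr ⟨k * g + j, (mul_add_ediv_emod hng k).2, ?_⟩
    rw [stretch_sub_one_of_emod_eq (mul_add_ediv_emod hng k).2, (mul_add_ediv_emod hng k).1]
  · refine Or.inl ⟨k * g + (j - 1 : ℕ), ?_⟩
    rw [stretch_mul_add (by omega), if_pos (by omega), Nat.sub_add_cancel (by omega)]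

lemma stretch_lt_stretch_sub_one_iff (hg : 0 < g) (hng : n < g) {t : ℤ} (ht : t % g = n)
    (y : ℤ) : stretch g n y < stretch g n t - 1 ↔ y < t := by
  have := (stretch_strictMono (n := n) hg).lt_iff_lt (a := y) (b := t)
  have := stretch_ne_stretch_sub_one hg hng ht y
  omega

lemma stretch_sub_one_lt_stretch_iff (hg : 0 < g) (hng : n < g) {t : ℤ} (ht : t % g = n)
    (x : ℤ) : stretch g n t - 1 < stretch g n x ↔ t ≤ x := by
  have := (stretch_strictMono (n := n) hg).le_iff_le (a := t) (b := x)
  have := stretch_ne_stretch_sub_one hg hng ht x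
  omega

/-- The inversion matching a residue pair `(t, y)`: its end on the new runner `n` sits at
`stretch g n t - 1` and is the upper end (a bead) if `t < 0`, the lower end (a gap) if `t ≥ 0`. -/
noncomputable def slotPair (g n : ℕ) (s : ℤ × ℤ) : ℤ × ℤ :=
  if s.1 < 0 then (stretch g n s.1 - 1, stretch g n s.2) else (stretch g n s.2, stretch g n s.1 - 1)

variable {Z Z' : Set ℤ}

lemma inversions_subset_of_stretch (hng : n < g) (hstretch : ∀ x, stretch g n x ∈ Z' ↔ x ∈ Z)
    (hslot : ∀ t : ℤ, t % g = n → (stretch g n t - 1 ∈ Z' ↔ t < 0)) :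
    inversions Z' ⊆ Prod.map (stretch g n) (stretch g n) '' inversions Z ∪
      slotPair g n '' residuePairs Z g n := by
  have hg : 0 < g := by omega
  rintro ⟨x', y'⟩ ⟨hx', hy', hyx'⟩
  simp only [residuePairs, inversions, mem_union, mem_image, mem_ofPred_eq, Prod.exists,
    Prod.map, Prod.mk.injEq]
  rcases exists_stretch_or_stretch_sub_one hng x' with ⟨x, rfl⟩ | ⟨t, ht, rfl⟩ <;>
    rcases exists_stretch_or_stretch_sub_one hng y' with ⟨y, rfl⟩ | ⟨s, hs, rfl⟩
  · exact Or.inl ⟨x, y, ⟨(hstretch x).1 hx', fun h => hy' ((hstretch y).2 h),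
      (stretch_strictMono hg).lt_iff_lt.1 hyx'⟩, rfl, rfl⟩
  · have hs0 : ¬ s < 0 := fun h => hy' ((hslot s hs).2 h)
    exact Or.inr ⟨s, x, ⟨hs, Or.inr ⟨not_lt.1 hs0, (hstretch x).1 hx',
      (stretch_sub_one_lt_stretch_iff hg hng hs x).1 hyx'⟩⟩, if_neg hs0⟩
  · have ht0 : t < 0 := (hslot t ht).1 hx'
    exact Or.inr ⟨t, y, ⟨ht, Or.inl ⟨ht0, fun h => hy' ((hstretch y).2 h),
      (stretch_lt_stretch_sub_one_iff hg hng ht y).1 hyx'⟩⟩, if_pos ht0⟩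
  · have ht0 : t < 0 := (hslot t ht).1 hx'
    have hs0 : ¬ s < 0 := fun h => hy' ((hslot s hs).2 h)
    have := (stretch_strictMono (n := n) hg).lt_iff_lt.1 (show stretch g n s < stretch g n t by
      linarith)
    omega

lemma image_subset_inversions_of_stretch (hng : n < g)
    (hstretch : ∀ x, stretch g n x ∈ Z' ↔ x ∈ Z)
    (hslot : ∀ t : ℤ, t % g = n → (stretch g n t - 1 ∈ Z' ↔ t < 0)) :
    Prod.map (stretch g n) (stretch g n) '' inversions Z ∪ slotPair g n '' residuePairs Z g n ⊆
      inversions Z' := by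
  have hg : 0 < g := by omega
  rintro _ (⟨⟨x, y⟩, ⟨hx, hy, hyx⟩, rfl⟩ | ⟨⟨t, y⟩, ⟨ht, ⟨ht0, hy, hyt⟩ | ⟨ht0, hy, hty⟩⟩, rfl⟩)
  · exact ⟨(hstretch x).2 hx, fun h => hy ((hstretch y).1 h), stretch_strictMono hg hyx⟩
  · simp only [slotPair, if_pos ht0]
    exact ⟨(hslot t ht).2 ht0, fun h => hy ((hstretch y).1 h),
      (stretch_lt_stretch_sub_one_iff hg hng ht y).2 hyt⟩
  · simp only [slotPair, if_neg (not_lt.2 ht0)]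
    exact ⟨(hstretch y).2 hy, fun h => (not_lt.2 ht0) ((hslot t ht).1 h),
      (stretch_sub_one_lt_stretch_iff hg hng ht y).2 hty⟩

lemma disjoint_image_slotPair (hng : n < g) (A : Set (ℤ × ℤ)) :
    Disjoint (Prod.map (stretch g n) (stretch g n) '' A) (slotPair g n '' residuePairs Z g n) := by
  rw [disjoint_left]
  rintro _ ⟨⟨x, y⟩, -, rfl⟩ ⟨⟨t, y'⟩, ⟨ht, -⟩, h⟩
  simp only [slotPair, Prod.map] at h
  split_ifs at h <;> simp only [Prod.mk.injEq] at h
  · exact stretch_ne_stretch_sub_one (by omega) hng ht x h.1.symm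
  · exact stretch_ne_stretch_sub_one (by omega) hng ht y h.2.symm

lemma injOn_slotPair (hng : n < g) : InjOn (slotPair g n) (residuePairs Z g n) := by
  have hσ := (stretch_strictMono (n := n) (show 0 < g by omega)).injective
  rintro ⟨t, y⟩ ⟨ht, -⟩ ⟨t', y'⟩ ⟨ht', -⟩ h
  simp only [slotPair] at h
  split_ifs at h <;> simp only [Prod.mk.injEq] at h ⊢
  · exact ⟨hσ (by linarith [h.1]), hσ h.2⟩
  · exact absurd h.1.symm (stretch_ne_stretch_sub_one (by omega) hng ht y')
  · exact absurd h.1 (stretch_ne_stretch_sub_one (by omega) hng ht' y)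
  · exact ⟨hσ (by linarith [h.2]), hσ h.1⟩

theorem ncard_inversions_of_stretch (hng : n < g) (hstretch : ∀ x, stretch g n x ∈ Z' ↔ x ∈ Z)
    (hslot : ∀ t : ℤ, t % g = n → (stretch g n t - 1 ∈ Z' ↔ t < 0))
    (hinv : (inversions Z).Finite) (hres : (residuePairs Z g n).Finite) :
    (inversions Z').ncard = (inversions Z).ncard + (residuePairs Z g n).ncard := by
  have hσ := (stretch_strictMono (n := n) (show 0 < g by omega)).injective
  rw [(inversions_subset_of_stretch hng hstretch hslot).antisymm
      (image_subset_inversions_of_stretch hng hstretch hslot),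
    ncard_union_eq (disjoint_image_slotPair hng _) (hinv.image _) (hres.image _),
    (hσ.prodMap hσ).injOn.ncard_image, (injOn_slotPair hng).ncard_image]

lemma stretch_mem_coreBetaSet_iff (hg : 0 < g) {m m' : ℕ → ℤ}
    (hins : ∀ i < g, m' (i + if n ≤ i then 1 else 0) = m i) (x : ℤ) :
    stretch g n x ∈ coreBetaSet (g + 1) m' ↔ x ∈ coreBetaSet g m := by
  obtain ⟨k, i, hi, rfl⟩ := exists_eq_mul_add hg x
  rw [stretch_mul_add hi, mul_add_mem_coreBetaSet (by split_ifs <;> omega), hins i hi,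
    mul_add_mem_coreBetaSet hi]

lemma stretch_sub_one_mem_coreBetaSet_iff (hng : n < g) {m' : ℕ → ℤ} (hzero : m' n = 0)
    {t : ℤ} (ht : t % g = n) : stretch g n t - 1 ∈ coreBetaSet (g + 1) m' ↔ t < 0 := by
  rw [stretch_sub_one_of_emod_eq ht, mul_add_mem_coreBetaSet (by omega), hzero,
    Int.ediv_lt_iff_lt_mul (by omega), zero_mul]

end Stretch

theorem psize_eq_psize_add_resCount {g n : ℕ} {p p' : ℕ → ℕ} (hng : n < g) (hp : IsPartition p)
    (hc : IsCore g p) (hp' : IsPartition p') (hc' : IsCore (g + 1) p')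
    (hzero : ncharge (g + 1) p' n = 0)
    (hins : ∀ i < g, ncharge (g + 1) p' (i + if n ≤ i then 1 else 0) = ncharge g p i) :
    psize p' = psize p + resCount g p n := by
  have hg : 0 < g := by omega
  have hZ := betaSet_eq_coreBetaSet_ncharge hp hg hc
  have hZ' := betaSet_eq_coreBetaSet_ncharge hp' (Nat.succ_pos g) hc'
  rw [psize_eq_ncard_inversions hp', psize_eq_ncard_inversions hp,
    resCount_eq_ncard_residuePairs hp]
  refine ncard_inversions_of_stretch hng (fun x => ?_) (fun t ht => ?_)
    (finite_inversions_betaSet hp) (finite_residuePairs_betaSet hp g n)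
  · rw [hZ, hZ', stretch_mem_coreBetaSet_iff hg hins]
  · rw [hZ', stretch_sub_one_mem_coreBetaSet_iff hng hzero ht]

section ChargeVectors

variable {g n : ℕ} {m m' μ : ℕ → ℤ}

lemma isAntipalindromic_extVecAp (m : ℕ → ℤ) : IsAntipalindromic (2 * n + 1) (extVecAp n m) := by
  intro i hi
  rw [show 2 * n + 1 - 1 - i = 2 * n - i by omega]
  rcases lt_trichotomy i n with h | rfl | h
  · simp [extVecAp, h, show ¬ 2 * n - i < n by omega, show 2 * n - i ≠ n by omega,
      show 2 * n - (2 * n - i) = i by omega]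
  · simp [extVecAp, show 2 * i - i = i by omega]
  · simp [extVecAp, show 2 * n - i < n by omega, show ¬ i < n by omega, show i ≠ n by omega,
      show i ≤ 2 * n by omega]

lemma extVecAp_self : extVecAp n m n = 0 := by
  simp [extVecAp]

lemma IsAntipalindromic.extVecAp_succAbove (h : IsAntipalindromic (2 * n) m) {i : ℕ}
    (hi : i < 2 * n) : extVecAp n m (i + if n ≤ i then 1 else 0) = m i := by
  split_ifs with hni
  · have := h (2 * n - (i + 1)) (by omega)
    simp only [extVecAp, show ¬ i + 1 < n by omega, show i + 1 ≠ n by omega,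
      show i + 1 ≤ 2 * n by omega, if_false, if_true]
    rw [show 2 * n - 1 - (2 * n - (i + 1)) = i by omega] at this
    rw [this]
  · simp [extVecAp, not_le.1 hni]

lemma IsAntipalindromic.eq_of_extVecAp_eq (hm : IsAntipalindromic (2 * n) m)
    (hm' : IsAntipalindromic (2 * n) m') (h : ∀ i < 2 * n + 1, extVecAp n m i = extVecAp n m' i) :
    ∀ i < 2 * n, m i = m' i := fun i hi => by
  rw [← hm.extVecAp_succAbove hi, ← hm'.extVecAp_succAbove hi, h _ (by split_ifs <;> omega)]

def eraseAt (n : ℕ) (μ : ℕ → ℤ) (i : ℕ) : ℤ := if i < n then μ i else μ (i + 1)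

lemma isAntipalindromic_eraseAt (h : IsAntipalindromic (2 * n + 1) μ) :
    IsAntipalindromic (2 * n) (eraseAt n μ) := by
  intro i hi
  rcases Nat.lt_or_ge i n with hin | hin
  · have := h i (by omega)
    simp only [eraseAt, show ¬ 2 * n - 1 - i < n by omega, hin, if_true, if_false]
    rwa [show 2 * n - 1 - i + 1 = 2 * n + 1 - 1 - i by omega]
  · have := h (i + 1) (by omega)
    simp only [eraseAt, show 2 * n - 1 - i < n by omega, show ¬ i < n by omega, if_true,
      if_false]
    rwa [show 2 * n - 1 - i = 2 * n + 1 - 1 - (i + 1) by omega]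

lemma extVecAp_eq_of_eq_eraseAt (h : IsAntipalindromic (2 * n + 1) μ)
    (hm : ∀ i < 2 * n, m i = eraseAt n μ i) {i : ℕ} (hi : i < 2 * n + 1) :
    extVecAp n m i = μ i := by
  rcases lt_trichotomy i n with hin | rfl | hin
  · simp [extVecAp, hin, hm i (by omega), eraseAt]
  · have := h i hi
    rw [show 2 * i + 1 - 1 - i = i by omega] at this
    simp only [extVecAp_self]
    omega
  · have := h i hi
    simp only [extVecAp, show ¬ i < n by omega, show i ≠ n by omega, show i ≤ 2 * n by omega,
      if_true, if_false, hm (2 * n - i) (by omega), eraseAt, show 2 * n - i < n by omega]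
    rw [show 2 * n + 1 - 1 - i = 2 * n - i by omega] at this
    omega

end ChargeVectors

/-- The map sending a self-conjugate `2n`-core `c` with
`φ_{2n}(c) = (m_0, …, m_{n-1}, -m_{n-1}, …, -m_0)` to
`c' = φ_{2n+1}^{-1}(m_0, …, m_{n-1}, 0, -m_{n-1}, …, -m_0)` is a bijection from
`𝒞_{2n}^s` onto `𝒞_{2n+1}^s`, and `|c'| = |c| + a_n(c)`. -/
theorem type_A_2n_prime_2_atomic_length (n : ℕ) (hn : 2 ≤ n) :
    ∃ F : {c : ℕ → ℕ // IsPartition c ∧ IsCore (2 * n) c ∧ SelfConj c} →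
          {c' : ℕ → ℕ // IsPartition c' ∧ IsCore (2 * n + 1) c' ∧ SelfConj c'},
      Function.Bijective F ∧
      ∀ c, (∀ i < 2 * n + 1,
          ncharge (2 * n + 1) (F c).1 i = extVecAp n (ncharge (2 * n) c.1) i) ∧
        psize (F c).1 = psize c.1 + resCount (2 * n) c.1 n := by
  have hg : 0 < 2 * n := by omega
  have hg' : 0 < 2 * n + 1 := Nat.succ_pos _
  have hanti : ∀ c : {c : ℕ → ℕ // IsPartition c ∧ IsCore (2 * n) c ∧ SelfConj c},
      IsAntipalindromic (2 * n) (ncharge (2 * n) c.1) := fun c =>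
    (selfConj_iff_isAntipalindromic_ncharge c.2.1 hg c.2.2.1).1 c.2.2.2
  choose G hGp hGc hGsc hG using fun c : ℕ → ℕ =>
    exists_selfConj_ncharge_eq hg' (isAntipalindromic_extVecAp (n := n) (ncharge (2 * n) c))
  refine ⟨fun c => ⟨G c.1, hGp _, hGc _, hGsc _⟩, ⟨fun c₁ c₂ h => ?_, fun c'' => ?_⟩,
    fun c => ⟨hG c.1, ?_⟩⟩
  · have hG₁₂ : G c₁.1 = G c₂.1 := congrArg Subtype.val h
    exact Subtype.ext <| eq_of_ncharge_eq c₁.2.1 c₂.2.1 hg c₁.2.2.1 c₂.2.2.1 <|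
      (hanti c₁).eq_of_extVecAp_eq (hanti c₂) fun i hi => by rw [← hG _ i hi, ← hG _ i hi, hG₁₂]
  · obtain ⟨c'', hp'', hc'', hsc''⟩ := c''
    have hμ := (selfConj_iff_isAntipalindromic_ncharge hp'' hg' hc'').1 hsc''
    obtain ⟨c, hp, hc, hsc, hch⟩ := exists_selfConj_ncharge_eq hg (isAntipalindromic_eraseAt hμ)
    refine ⟨⟨c, hp, hc, hsc⟩, Subtype.ext <| eq_of_ncharge_eq (hGp c) hp'' hg' (hGc c) hc''
      fun i hi => ?_⟩
    rw [hG c i hi, extVecAp_eq_of_eq_eraseAt hμ hch hi]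
  · refine psize_eq_psize_add_resCount (by omega) c.2.1 c.2.2.1 (hGp _) (hGc _)
      (by rw [hG _ n (by omega), extVecAp_self]) fun i hi => ?_
    rw [hG _ _ (by split_ifs <;> omega), (hanti c).extVecAp_succAbove hi]
end

section
/- Let n ≥ 2 and let c be a self-conjugate 2n-core with φ_{2n}(c) = (m_0,…,m_{n−1}, −m_{n−1},…,−m_0). Then c has an even number of boxes on its main diagonal (i.e. c ∈ 𝒞_{2n}^{s,p}) if and only if Σ_{i=0}^{n−1} |m_i| ≡ 0 (mod 2). -/
open scoped Classical

/-!
The word of `λ` has its `0`'s at the positions `λ_{m+1} - (m+1)` and its `1`'s at the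
positions `j - λ^tr_{j+1}`, and a `0` at `k` together with a `1` at `k - h` is the row and the
column of a box of hook length `h`. So in the word of a `g`-core each residue class modulo `g`
reads `0⋯01⋯1`, switching at `m_i`. The Durfee square has one row for each `0` at a nonnegative position, hence
`durfee = ∑ max(0, m_i)`. Self-conjugacy reverses and complements the word, so
`m_{g-1-i} = -m_i`, and for `g = 2n` the sum becomes `∑_{i<n} |m_i|`.
-/

lemma IsLowerSet.mem_iff_lt_natCard {S : Set ℕ} (hS : IsLowerSet S) (hfin : S.Finite) {k : ℕ} :
    k ∈ S ↔ k < Nat.card S := by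
  obtain h | ⟨a, rfl⟩ := hS.eq_univ_or_Iio
  · exact absurd (h ▸ hfin) Set.infinite_univ
  · simp

lemma Int.csInf_le_iff_mem {S : Set ℤ} (hne : S.Nonempty) (hbdd : BddBelow S)
    (hsucc : ∀ k ∈ S, k + 1 ∈ S) {k : ℤ} : sInf S ≤ k ↔ k ∈ S :=
  ⟨fun hk => Int.leInduction (motive := fun j _ => j ∈ S) (Int.csInf_mem hne hbdd)
      (fun j _ hj => hsucc j hj) k hk,
    fun hk => csInf_le hbdd hk⟩

lemma Finset.sum_range_two_mul_eq_sum_add_reflect {M : Type*} [AddCommMonoid M] (f : ℕ → M)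
    (n : ℕ) :
    ∑ i ∈ Finset.range (2 * n), f i = ∑ i ∈ Finset.range n, (f i + f (2 * n - 1 - i)) := by
  rw [two_mul, Finset.sum_range_add, Finset.sum_add_distrib,
    ← Finset.sum_range_reflect (fun i => f (n + i)) n]
  refine congrArg _ (Finset.sum_congr rfl fun i hi => congrArg f ?_)
  have := Finset.mem_range.mp hi
  omega

lemma word_eq_zero_iff {p : ℕ → ℕ} {k : ℤ} :
    word p k = 0 ↔ ∃ m : ℕ, k = (p m : ℤ) - ((m : ℤ) + 1) := by
  unfold word; split_ifs <;> simp_all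

lemma word_eq_one_iff_not_exists {p : ℕ → ℕ} {k : ℤ} :
    word p k = 1 ↔ ¬ ∃ m : ℕ, k = (p m : ℤ) - ((m : ℤ) + 1) := by
  unfold word; split_ifs <;> simp_all

lemma word_eq_zero_or_eq_one (p : ℕ → ℕ) (k : ℤ) : word p k = 0 ∨ word p k = 1 := by
  unfold word; split_ifs <;> simp

lemma ncharge_eq_of_forall_iff {g : ℕ} {p : ℕ → ℕ} {i : ℕ} {c : ℤ}
    (h : ∀ k : ℤ, word p (k * g + i) = 1 ↔ c ≤ k) : ncharge g p i = c := by
  rw [ncharge, show {k : ℤ | word p (k * g + i) = 1} = Set.Ici c from Set.ext h, csInf_Ici]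

namespace IsPartition

section

variable {p : ℕ → ℕ} (hp : IsPartition p)
include hp

lemma mem_iff_lt_natCard {S : Set ℕ} (hS : IsLowerSet S) (hsupp : ∀ i ∈ S, p i ≠ 0)
    {i : ℕ} : i ∈ S ↔ i < Nat.card S := by
  obtain ⟨N, hN⟩ := hp.2
  refine hS.mem_iff_lt_natCard ((Set.finite_Iio N).subset fun j hj => ?_)
  by_contra hNj
  exact hsupp j hj (hN j (not_lt.mp hNj))

lemma ne_zero_iff_lt_plen {i : ℕ} : p i ≠ 0 ↔ i < plen p :=
  hp.mem_iff_lt_natCard (S := {i | p i ≠ 0})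
    (fun a b hba (ha : p a ≠ 0) => show p b ≠ 0 by have := hp.1 hba; omega) fun _ h => h

lemma succ_le_iff_lt_pconj {i j : ℕ} : j + 1 ≤ p i ↔ i < pconj p j :=
  hp.mem_iff_lt_natCard (S := {i | j + 1 ≤ p i})
    (fun a b hba (ha : j + 1 ≤ p a) => ha.trans (hp.1 hba)) fun _ (h : j + 1 ≤ _) => by omega

lemma succ_le_iff_lt_durfee {i : ℕ} : i + 1 ≤ p i ↔ i < durfee p :=
  hp.mem_iff_lt_natCard (S := {i | i + 1 ≤ p i})
    (fun a b hba (ha : a + 1 ≤ p a) => show b + 1 ≤ p b by have := hp.1 hba; omega)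
    fun _ (h : _ + 1 ≤ _) => by omega

lemma strictAnti_sub_succ : StrictAnti fun m : ℕ => (p m : ℤ) - ((m : ℤ) + 1) :=
  fun a b hab => by have := hp.1 hab.le; dsimp only; omega

lemma sub_succ_ne_sub_pconj (m j : ℕ) :
    (p m : ℤ) - ((m : ℤ) + 1) ≠ (j : ℤ) - (pconj p j : ℤ) := by
  have := (hp.succ_le_iff_lt_pconj (i := m) (j := j)).not
  omega

/-- The positions `j - λ^tr_{j+1}` fill the complement of the positions `λ_{m+1} - (m+1)`:
with `m` the first index where `λ_{m+1} - (m+1) < k`, the column `j = k + m` has length `m`. -/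
lemma exists_eq_sub_pconj {k : ℤ} (hk : ∀ m : ℕ, k ≠ (p m : ℤ) - ((m : ℤ) + 1)) :
    ∃ j : ℕ, k = (j : ℤ) - (pconj p j : ℤ) := by
  obtain ⟨N, hN⟩ := hp.2
  have hex : ∃ i : ℕ, (p i : ℤ) - ((i : ℤ) + 1) < k :=
    ⟨N + k.natAbs, by rw [hN _ (Nat.le_add_right _ _)]; omega⟩
  set m := Nat.find hex
  have hm : (p m : ℤ) - ((m : ℤ) + 1) < k := Nat.find_spec hex
  have hbefore : ∀ i < m, k < (p i : ℤ) - ((i : ℤ) + 1) := fun i hi =>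
    lt_of_le_of_ne (not_lt.mp (Nat.find_min hex hi)) (hk i)
  have hpconj : pconj p (k + m).toNat = m := by
    refine le_antisymm (not_lt.mp fun h => ?_) (not_lt.mp fun h => ?_)
    · have := hp.succ_le_iff_lt_pconj.mpr h
      omega
    · have := hp.1 (Nat.sub_le m 1)
      have := hbefore (m - 1) (by omega)
      have := hp.succ_le_iff_lt_pconj.mp (show (k + m).toNat + 1 ≤ p (m - 1) by omega)
      omega
  exact ⟨(k + m).toNat, by omega⟩

lemma exists_lt_durfee_iff {t : ℤ} :
    (∃ m < durfee p, (p m : ℤ) - ((m : ℤ) + 1) = t) ↔ 0 ≤ t ∧ word p t = 0 := by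
  rw [word_eq_zero_iff]
  constructor
  · rintro ⟨m, hm, rfl⟩
    exact ⟨by have := hp.succ_le_iff_lt_durfee.mpr hm; omega, m, rfl⟩
  · rintro ⟨ht, m, rfl⟩
    exact ⟨m, hp.succ_le_iff_lt_durfee.mp (by omega), rfl⟩

lemma word_eq_one_iff {k : ℤ} :
    word p k = 1 ↔ ∃ j : ℕ, k = (j : ℤ) - (pconj p j : ℤ) := by
  rw [word_eq_one_iff_not_exists, not_exists]
  exact ⟨hp.exists_eq_sub_pconj, fun ⟨j, hj⟩ m hm =>
    hp.sub_succ_ne_sub_pconj m j (hm ▸ hj)⟩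

lemma mem_hooks {h : ℕ} {k : ℤ} (h0 : word p k = 0) (h1 : word p (k - h) = 1) :
    h ∈ hooks p := by
  obtain ⟨m, hm⟩ := word_eq_zero_iff.mp h0
  obtain ⟨j, hj⟩ := hp.word_eq_one_iff.mp h1
  have hjm : j + 1 ≤ p m := by
    have := (hp.succ_le_iff_lt_pconj (i := m) (j := j)).not
    omega
  have hmj : m < pconj p j := hp.succ_le_iff_lt_pconj.mp hjm
  have hcell : (m, j) ∈ cells p := by
    have := hp.1 (Nat.zero_le m)
    simp only [cells, Finset.mem_filter, Finset.mem_product, Finset.mem_range]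
    exact ⟨⟨hp.ne_zero_iff_lt_plen.mp (by omega), by omega⟩, by omega⟩
  exact Multiset.mem_map.mpr
    ⟨(m, j), hcell, show hookLen p m j = h by unfold hookLen; omega⟩

lemma word_add_eq_one {g : ℕ} (hcore : IsCore g p) {k : ℤ} (h1 : word p k = 1) :
    word p (k + g) = 1 :=
  (word_eq_zero_or_eq_one p (k + g)).resolve_left fun h0 =>
    hcore (hp.mem_hooks h0 (by rwa [add_sub_cancel_right]))

lemma exists_word_eq_zero_of_le : ∃ L : ℤ, ∀ t ≤ L, word p t = 0 := by
  obtain ⟨N, hN⟩ := hp.2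
  exact ⟨-N - 1, fun t ht => word_eq_zero_iff.mpr
    ⟨(-t - 1).toNat, by rw [hN _ (by omega)]; omega⟩⟩

lemma word_eq_one_of_le {t : ℤ} (ht : (p 0 : ℤ) ≤ t) : word p t = 1 :=
  word_eq_one_iff_not_exists.mpr fun ⟨m, hm⟩ => by have := hp.1 (Nat.zero_le m); omega

end

section

variable {p : ℕ → ℕ} (hp : IsPartition p) {g : ℕ} (hcore : IsCore g p)
include hp hcore

lemma word_eq_one_iff_ncharge_le (hg : 1 ≤ g) (i : ℕ) {k : ℤ} :
    word p (k * g + i) = 1 ↔ ncharge g p i ≤ k := by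
  set S := {k : ℤ | word p (k * g + i) = 1}
  have hsucc : ∀ k ∈ S, k + 1 ∈ S := fun k (hk : word p _ = 1) =>
    show word p ((k + 1) * g + i) = 1 by
      rw [add_mul, one_mul, add_right_comm]; exact hp.word_add_eq_one hcore hk
  have hne : S.Nonempty := ⟨p 0, hp.word_eq_one_of_le (by nlinarith)⟩
  have hbdd : BddBelow S := by
    obtain ⟨L, hL⟩ := hp.exists_word_eq_zero_of_le
    refine ⟨min 0 (L - i), fun k (hk : word p _ = 1) => not_lt.mp fun hlt => ?_⟩
    have : k * g + i ≤ L := by nlinarith [min_le_left 0 (L - i), min_le_right 0 (L - i)]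
    simp [hL _ this] at hk
  exact (Int.csInf_le_iff_mem hne hbdd hsucc).symm

lemma nonneg_word_eq_zero_iff (hg : 1 ≤ g) {t : ℤ} :
    (0 ≤ t ∧ word p t = 0) ↔
      ∃ i < g, ∃ k : ℤ, (0 ≤ k ∧ k < ncharge g p i) ∧ k * g + i = t := by
  have hg0 : (0 : ℤ) < g := by exact_mod_cast hg
  constructor
  · rintro ⟨ht, h0⟩
    have hdecomp : t / g * g + ((t % g).toNat : ℕ) = t := by
      rw [Int.toNat_of_nonneg (Int.emod_nonneg t hg0.ne'), mul_comm, Int.mul_ediv_add_emod]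
    refine ⟨(t % g).toNat, by have := Int.emod_lt_of_pos t hg0; omega, t / g,
      ⟨Int.ediv_nonneg ht hg0.le, not_le.mp fun hle => ?_⟩, hdecomp⟩
    have := (hp.word_eq_one_iff_ncharge_le hcore hg _).mpr hle
    rw [hdecomp] at this
    omega
  · rintro ⟨i, -, k, ⟨hk0, hk⟩, rfl⟩
    refine ⟨by positivity, (word_eq_zero_or_eq_one p _).resolve_right fun h1 => ?_⟩
    exact (hp.word_eq_one_iff_ncharge_le hcore hg i).mp h1 |>.not_gt hk

theorem durfee_eq_sum_toNat_ncharge (hg : 1 ≤ g) :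
    durfee p = ∑ i ∈ Finset.range g, (ncharge g p i).toNat := by
  have hg0 : (g : ℤ) ≠ 0 := by exact_mod_cast (show g ≠ 0 by omega)
  have hres : ∀ i < g, ∀ k : ℤ, (k * g + i) % g = i := fun i hi k => by
    rw [add_comm, Int.add_mul_emod_self_right, Int.emod_eq_of_lt] <;> omega
  calc durfee p
      = ((Finset.range (durfee p)).image fun m : ℕ => (p m : ℤ) - ((m : ℤ) + 1)).card := by
        rw [Finset.card_image_of_injective _ hp.strictAnti_sub_succ.injective, Finset.card_range]
    _ = ((Finset.range g).biUnion fun i =>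
          (Finset.Ico 0 (ncharge g p i)).image fun k : ℤ => k * g + (i : ℤ)).card := by
        congr 1
        ext t
        simp only [Finset.mem_image, Finset.mem_range, Finset.mem_biUnion, Finset.mem_Ico]
        rw [hp.exists_lt_durfee_iff, hp.nonneg_word_eq_zero_iff hcore hg]
    _ = ∑ i ∈ Finset.range g, (ncharge g p i).toNat := by
        rw [Finset.card_biUnion]
        · refine Finset.sum_congr rfl fun i _ => ?_
          have hinj : Function.Injective fun k : ℤ => k * g + (i : ℤ) :=
            (add_left_injective _).comp (mul_left_injective₀ hg0)
          rw [Finset.card_image_of_injective _ hinj, Int.card_Ico, sub_zero]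
        · intro i hi j hj hij
          simp only [Finset.coe_range, Set.mem_Iio] at hi hj
          refine Finset.disjoint_left.mpr fun t hti htj => hij ?_
          obtain ⟨a, -, rfl⟩ := Finset.mem_image.mp hti
          obtain ⟨b, -, hb⟩ := Finset.mem_image.mp htj
          have := hres j hj b
          rw [hb, hres i hi a] at this
          exact_mod_cast this

end

section

variable {p : ℕ → ℕ} (hp : IsPartition p) (hsc : SelfConj p)
include hp hsc

lemma word_neg_sub_one_eq_zero_iff {k : ℤ} : word p (-k - 1) = 0 ↔ word p k = 1 := by
  have hrow : ∀ j, (pconj p j : ℤ) = p j := fun j => by rw [← congrFun hsc j]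
  rw [hp.word_eq_one_iff, word_eq_zero_iff]
  exact exists_congr fun j => by rw [hrow]; omega

lemma ncharge_sub_one_sub {g : ℕ} (hcore : IsCore g p) (hg : 1 ≤ g) {i : ℕ} (hi : i < g) :
    ncharge g p (g - 1 - i) = -ncharge g p i := by
  refine ncharge_eq_of_forall_iff fun k => ?_
  rw [← hp.word_neg_sub_one_eq_zero_iff hsc,
    show -(k * g + ((g - 1 - i : ℕ) : ℤ)) - 1 = (-k - 1) * g + i by
      rw [Nat.sub_sub, Nat.cast_sub (by omega)]; push_cast; ring]
  have hiff := hp.word_eq_one_iff_ncharge_le hcore hg i (k := -k - 1)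
  constructor
  · intro h0
    exact not_lt.mp fun hlt => by simp [hiff.mpr (by omega)] at h0
  · intro hle
    exact (word_eq_zero_or_eq_one p _).resolve_right fun h1 => by have := hiff.mp h1; omega

theorem durfee_eq_sum_natAbs_ncharge {n : ℕ} (hcore : IsCore (2 * n) p) (hn : 1 ≤ n) :
    durfee p = ∑ i ∈ Finset.range n, (ncharge (2 * n) p i).natAbs := by
  rw [hp.durfee_eq_sum_toNat_ncharge hcore (by omega),
    Finset.sum_range_two_mul_eq_sum_add_reflect]
  refine Finset.sum_congr rfl fun i hi => ?_
  rw [hp.ncharge_sub_one_sub hsc hcore (by omega) (by have := Finset.mem_range.mp hi; omega)]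
  omega

end

end IsPartition

/-- A self-conjugate `2n`-core `c` with
`φ_{2n}(c) = (m_0, …, m_{n-1}, -m_{n-1}, …, -m_0)` has an even number of boxes
on its main diagonal (i.e. `c ∈ 𝒞_{2n}^{s,p}`) if and only if
`∑_{i=0}^{n-1} |m_i| ≡ 0 (mod 2)`. -/
theorem even_diagonal_iff_charge_parity (n : ℕ) (hn : 2 ≤ n) (c : ℕ → ℕ)
    (hc : IsPartition c) (hcore : IsCore (2 * n) c) (hsc : SelfConj c) :
    Even (durfee c) ↔
      Even (∑ i ∈ Finset.range n, (ncharge (2 * n) c i).natAbs) := by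
  rw [hc.durfee_eq_sum_natAbs_ncharge hsc hcore (by omega)]
end
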